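/- Let E = X ⊕ Y be a Banach space with associated projection p onto X along Y. If the induced map π₀(GL(X)) × π₀(GL(Y)) → π₀(GL(E)) is surjective, then the conjugacy class {t·p·t⁻¹ : t ∈ GL(E)} is contained in the path component of p in the space of idempotents of L(E). -/

import Mathlib

/-! Conjugation `u ↦ u p u⁻¹` is continuous on the units and lands in the idempotents, so a path of
units from `t` to `s` gives a path of idempotents from `t p t⁻¹` to `s p s⁻¹`. By hypothesis `t` is
joined to a block-diagonal unit `s = x ⊕ y`, which commutes with `p = 1 ⊕ 0`, so `s p s⁻¹ = p`. -/

theorem IsIdempotentElem.units_conj {M : Type*} [Monoid M] {p : M} (hp : IsIdempotentElem p)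
    (u : Mˣ) : IsIdempotentElem (↑u * p * ↑u⁻¹) := by
  calc ↑u * p * ↑u⁻¹ * (↑u * p * ↑u⁻¹) = ↑u * (p * (↑u⁻¹ * ↑u) * p) * ↑u⁻¹ := by
        simp only [mul_assoc]
    _ = ↑u * p * ↑u⁻¹ := by rw [Units.inv_mul, mul_one, hp.eq, mul_assoc]

theorem Joined.joinedIn_units_conj {M : Type*} [Monoid M] [TopologicalSpace M] [ContinuousMul M]
    {p : M} (hp : IsIdempotentElem p) {t s : Mˣ} (h : Joined t s) :
    JoinedIn {r : M | IsIdempotentElem r} (↑t * p * ↑t⁻¹) (↑s * p * ↑s⁻¹) := by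
  obtain ⟨γ⟩ := h
  have hconj : Continuous fun u : Mˣ => ↑u * p * ↑u⁻¹ :=
    (Units.continuous_val.mul continuous_const).mul Units.continuous_coe_inv
  exact ⟨γ.map hconj, fun i => hp.units_conj (γ i)⟩

theorem Commute.units_conj_eq {M : Type*} [Monoid M] {p : M} {s : Mˣ} (h : Commute (↑s : M) p) :
    ↑s * p * ↑s⁻¹ = p := by
  rw [h.eq, Units.mul_inv_cancel_right]

namespace ContinuousLinearMap

variable {R X Y : Type*} [Semiring R] [TopologicalSpace X] [AddCommMonoid X] [Module R X]
  [TopologicalSpace Y] [AddCommMonoid Y] [Module R Y]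

theorem isIdempotentElem_id_prodMap_zero :
    IsIdempotentElem ((ContinuousLinearMap.id R X).prodMap (0 : Y →L[R] Y)) := by
  ext v <;> simp

theorem commute_prodMap_id_prodMap_zero (x : X →L[R] X) (y : Y →L[R] Y) :
    Commute (x.prodMap y) ((ContinuousLinearMap.id R X).prodMap (0 : Y →L[R] Y)) := by
  ext v <;> simp

end ContinuousLinearMap

theorem stmt19_general {X Y : Type*} [NormedAddCommGroup X] [NormedSpace ℝ X]
    [NormedAddCommGroup Y] [NormedSpace ℝ Y]
    (p : (X × Y) →L[ℝ] (X × Y))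
    (hp : p = (ContinuousLinearMap.id ℝ X).prodMap (0 : Y →L[ℝ] Y))
    (hsurj : ∀ t : ((X × Y) →L[ℝ] (X × Y))ˣ,
      ∃ (x : (X →L[ℝ] X)ˣ) (y : (Y →L[ℝ] Y)ˣ) (s : ((X × Y) →L[ℝ] (X × Y))ˣ),
        (s : (X × Y) →L[ℝ] (X × Y)) = (x : X →L[ℝ] X).prodMap (y : Y →L[ℝ] Y) ∧
        Joined t s) :
    ∀ t : ((X × Y) →L[ℝ] (X × Y))ˣ,
      JoinedIn {r : (X × Y) →L[ℝ] (X × Y) | r * r = r} p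
        ((t : (X × Y) →L[ℝ] (X × Y)) * p * (↑t⁻¹ : (X × Y) →L[ℝ] (X × Y))) := by
  intro t
  obtain ⟨x, y, s, hs, hts⟩ := hsurj t
  subst hp
  have hsp : (s : (X × Y) →L[ℝ] (X × Y)) * _ * ↑s⁻¹ = _ := Commute.units_conj_eq <| by
    rw [hs]; exact ContinuousLinearMap.commute_prodMap_id_prodMap_zero _ _
  have hjoin := hts.joinedIn_units_conj ContinuousLinearMap.isIdempotentElem_id_prodMap_zero
  rw [hsp] at hjoin
  exact hjoin.symm

theorem stmt19 {X Y : Type*} [NormedAddCommGroup X] [NormedSpace ℝ X] [CompleteSpace X]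
    [NormedAddCommGroup Y] [NormedSpace ℝ Y] [CompleteSpace Y]
    (p : (X × Y) →L[ℝ] (X × Y))
    (hp : p = (ContinuousLinearMap.id ℝ X).prodMap (0 : Y →L[ℝ] Y))
    (hsurj : ∀ t : ((X × Y) →L[ℝ] (X × Y))ˣ,
      ∃ (x : (X →L[ℝ] X)ˣ) (y : (Y →L[ℝ] Y)ˣ) (s : ((X × Y) →L[ℝ] (X × Y))ˣ),
        (s : (X × Y) →L[ℝ] (X × Y)) = (x : X →L[ℝ] X).prodMap (y : Y →L[ℝ] Y) ∧
        Joined t s) :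
    ∀ t : ((X × Y) →L[ℝ] (X × Y))ˣ,
      JoinedIn {r : (X × Y) →L[ℝ] (X × Y) | r * r = r} p
        ((t : (X × Y) →L[ℝ] (X × Y)) * p * (↑t⁻¹ : (X × Y) →L[ℝ] (X × Y))) :=
  stmt19_general p hp hsurj
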